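/- Let S and A be finite types and consider two Markov decision processes on S and A with a common initial distribution ρ₀, transition kernels T¹, T² : S × A → PMF(S), and policies π¹, π² : S → PMF(A). Suppose D_TV(T¹(s,a), T²(s,a)) ≤ ε_T for all s, a and D_TV(π¹(s), π²(s)) ≤ ε_π for all s. Let r : S × A → ℝ satisfy |r(s,a)| ≤ R for all s, a, let γ ∈ [0,1), and let G¹(π¹) and G²(π²) denote the discounted returns of π¹ under T¹ and of π² under T², respectively. Then |G¹(π¹) − G²(π²)| ≤ 2Rγ(ε_π + ε_T)/(1 − γ)² + 2Rε_π/(1 − γ). -/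

import Mathlib

/-!
Total variation distance is subadditive along the MDP: passing from the state marginal `μₜ` to
the state-action marginal `pₜ` adds at most `ε_π`, and passing from `pₜ` to `μₜ₊₁` adds at most
`ε_T`, both by the coupling estimate `|a b - c d| ≤ |a - c| b + c |b - d|`. Starting from the
common `ρ₀`, this gives `D_TV(p¹ₜ, p²ₜ) ≤ t (ε_π + ε_T) + ε_π`, so the expected rewards at time
`t` differ by at most `2R` times that, and summing against `γᵗ` with
`∑ γᵗ = 1/(1-γ)` and `∑ t γᵗ = γ/(1-γ)²` gives the bound.
-/

open scoped BigOperators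

/-- Total variation distance between two PMFs on a finite type. -/
noncomputable def tv {X : Type*} [Fintype X] (p q : PMF X) : ℝ :=
  (1 / 2) * ∑ x, |(p x).toReal - (q x).toReal|

open Finset

section TotalVariation

variable {X Y : Type*} [Fintype X] [Fintype Y]

lemma tv_self (p : PMF X) : tv p p = 0 := by
  simp [tv]

lemma PMF.sum_toReal_eq_one (p : PMF X) : ∑ x, (p x).toReal = 1 := by
  rw [← ENNReal.toReal_sum fun x _ => p.apply_ne_top x, ← tsum_fintype (L := .unconditional X),
    p.tsum_coe, ENNReal.toReal_one]

lemma sum_abs_toReal_sub_eq_two_mul_tv (p q : PMF X) :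
    ∑ x, |(p x).toReal - (q x).toReal| = 2 * tv p q := by
  rw [tv]; ring

lemma abs_mul_sub_mul_le (a b c d : ℝ) (hb : 0 ≤ b) (hc : 0 ≤ c) :
    |a * b - c * d| ≤ |a - c| * b + c * |b - d| := by
  calc |a * b - c * d| = |(a - c) * b + c * (b - d)| := by ring_nf
    _ ≤ |(a - c) * b| + |c * (b - d)| := abs_add_le _ _
    _ = |a - c| * b + c * |b - d| := by rw [abs_mul, abs_mul, abs_of_nonneg hb, abs_of_nonneg hc]

lemma sum_sum_abs_toReal_mul_sub_le (p q : PMF X) (K L : X → PMF Y) {ε : ℝ}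
    (hKL : ∀ x, tv (K x) (L x) ≤ ε) :
    ∑ x, ∑ y, |(p x * K x y).toReal - (q x * L x y).toReal| ≤ 2 * (tv p q + ε) := by
  have hrow : ∀ x, ∑ y, |(p x * K x y).toReal - (q x * L x y).toReal|
      ≤ |(p x).toReal - (q x).toReal| + (q x).toReal * (2 * ε) := fun x =>
    calc ∑ y, |(p x * K x y).toReal - (q x * L x y).toReal|
        ≤ ∑ y, (|(p x).toReal - (q x).toReal| * (K x y).toReal
            + (q x).toReal * |(K x y).toReal - (L x y).toReal|) := by
          gcongr with y
          simp only [ENNReal.toReal_mul]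
          exact abs_mul_sub_mul_le _ _ _ _ ENNReal.toReal_nonneg ENNReal.toReal_nonneg
      _ = |(p x).toReal - (q x).toReal| + (q x).toReal * (2 * tv (K x) (L x)) := by
          rw [sum_add_distrib, ← mul_sum, ← mul_sum, (K x).sum_toReal_eq_one, mul_one,
            sum_abs_toReal_sub_eq_two_mul_tv]
      _ ≤ |(p x).toReal - (q x).toReal| + (q x).toReal * (2 * ε) := by
          gcongr
          exact hKL x
  calc ∑ x, ∑ y, |(p x * K x y).toReal - (q x * L x y).toReal|
      ≤ ∑ x, (|(p x).toReal - (q x).toReal| + (q x).toReal * (2 * ε)) :=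
        sum_le_sum fun x _ => hrow x
    _ = 2 * (tv p q + ε) := by
      rw [sum_add_distrib, ← sum_mul, q.sum_toReal_eq_one, sum_abs_toReal_sub_eq_two_mul_tv]
      ring

lemma tv_le_of_apply_eq_mul {μ₁ μ₂ : PMF X} {K₁ K₂ : X → PMF Y} {p₁ p₂ : PMF (X × Y)}
    (h₁ : ∀ x y, p₁ (x, y) = μ₁ x * K₁ x y) (h₂ : ∀ x y, p₂ (x, y) = μ₂ x * K₂ x y) {ε : ℝ}
    (hK : ∀ x, tv (K₁ x) (K₂ x) ≤ ε) :
    tv p₁ p₂ ≤ tv μ₁ μ₂ + ε := by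
  have hp : ∑ x, ∑ y, |(μ₁ x * K₁ x y).toReal - (μ₂ x * K₂ x y).toReal| = 2 * tv p₁ p₂ := by
    simp only [← h₁, ← h₂, ← Fintype.sum_prod_type (fun xy => |(p₁ xy).toReal - (p₂ xy).toReal|),
      sum_abs_toReal_sub_eq_two_mul_tv]
  linarith [sum_sum_abs_toReal_mul_sub_le μ₁ μ₂ K₁ K₂ hK]

lemma tv_le_of_apply_eq_sum_mul {p₁ p₂ : PMF X} {K₁ K₂ : X → PMF Y} {ν₁ ν₂ : PMF Y}
    (h₁ : ∀ y, ν₁ y = ∑ x, p₁ x * K₁ x y) (h₂ : ∀ y, ν₂ y = ∑ x, p₂ x * K₂ x y) {ε : ℝ}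
    (hK : ∀ x, tv (K₁ x) (K₂ x) ≤ ε) :
    tv ν₁ ν₂ ≤ tv p₁ p₂ + ε := by
  have hfinite : ∀ (p : PMF X) (K : X → PMF Y) x y, p x * K x y ≠ ⊤ := fun p K x y =>
    ENNReal.mul_ne_top (p.apply_ne_top x) ((K x).apply_ne_top y)
  have hpoint : ∀ y, |(ν₁ y).toReal - (ν₂ y).toReal|
      ≤ ∑ x, |(p₁ x * K₁ x y).toReal - (p₂ x * K₂ x y).toReal| := fun y => by
    rw [h₁, h₂, ENNReal.toReal_sum fun x _ => hfinite p₁ K₁ x y,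
      ENNReal.toReal_sum fun x _ => hfinite p₂ K₂ x y, ← sum_sub_distrib]
    exact abs_sum_le_sum_abs _ _
  have hsum : 2 * tv ν₁ ν₂ ≤ 2 * (tv p₁ p₂ + ε) :=
    calc 2 * tv ν₁ ν₂ = ∑ y, |(ν₁ y).toReal - (ν₂ y).toReal| :=
          (sum_abs_toReal_sub_eq_two_mul_tv ν₁ ν₂).symm
      _ ≤ ∑ y, ∑ x, |(p₁ x * K₁ x y).toReal - (p₂ x * K₂ x y).toReal| :=
          sum_le_sum fun y _ => hpoint y
      _ = ∑ x, ∑ y, |(p₁ x * K₁ x y).toReal - (p₂ x * K₂ x y).toReal| := sum_comm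
      _ ≤ 2 * (tv p₁ p₂ + ε) := sum_sum_abs_toReal_mul_sub_le p₁ p₂ K₁ K₂ hK
  linarith

lemma abs_sum_toReal_mul_le (p : PMF X) {r : X → ℝ} {R : ℝ} (hr : ∀ x, |r x| ≤ R) :
    |∑ x, (p x).toReal * r x| ≤ R :=
  calc |∑ x, (p x).toReal * r x| ≤ ∑ x, (p x).toReal * |r x| := by
        refine (abs_sum_le_sum_abs _ _).trans_eq (sum_congr rfl fun x _ => ?_)
        rw [abs_mul, abs_of_nonneg ENNReal.toReal_nonneg]
    _ ≤ ∑ x, (p x).toReal * R := by gcongr with x; exact hr x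
    _ = R := by rw [← sum_mul, p.sum_toReal_eq_one, one_mul]

lemma abs_sum_toReal_mul_sub_le (p q : PMF X) {r : X → ℝ} {R : ℝ} (hr : ∀ x, |r x| ≤ R) :
    |∑ x, (p x).toReal * r x - ∑ x, (q x).toReal * r x| ≤ 2 * R * tv p q :=
  calc |∑ x, (p x).toReal * r x - ∑ x, (q x).toReal * r x|
      ≤ ∑ x, |(p x).toReal - (q x).toReal| * |r x| := by
        rw [← sum_sub_distrib]
        refine (abs_sum_le_sum_abs _ _).trans_eq (sum_congr rfl fun x _ => ?_)
        rw [← sub_mul, abs_mul]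
    _ ≤ ∑ x, |(p x).toReal - (q x).toReal| * R := by gcongr with x; exact hr x
    _ = 2 * R * tv p q := by rw [← sum_mul, sum_abs_toReal_sub_eq_two_mul_tv]; ring

end TotalVariation

section Geometric

variable {γ : ℝ}

lemma summable_geometric_mul_of_abs_le (hγ0 : 0 ≤ γ) (hγ1 : γ < 1) {f : ℕ → ℝ} {C : ℝ}
    (hf : ∀ t, |f t| ≤ C) : Summable fun t => γ ^ t * f t := by
  refine Summable.of_norm_bounded ((summable_geometric_of_lt_one hγ0 hγ1).mul_right C) fun t => ?_
  rw [norm_mul, norm_pow, Real.norm_eq_abs, Real.norm_eq_abs, abs_of_nonneg hγ0]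
  exact mul_le_mul_of_nonneg_left (hf t) (pow_nonneg hγ0 t)

lemma hasSum_geometric_mul_linear (hγ0 : 0 ≤ γ) (hγ1 : γ < 1) (a b : ℝ) :
    HasSum (fun t : ℕ => γ ^ t * (a * t + b)) (a * γ / (1 - γ) ^ 2 + b / (1 - γ)) := by
  have hγ : ‖γ‖ < 1 := by rwa [Real.norm_of_nonneg hγ0]
  have h := ((hasSum_coe_mul_geometric_of_norm_lt_one hγ).mul_left a).add
    ((hasSum_geometric_of_lt_one hγ0 hγ1).mul_left b)
  rw [show a * γ / (1 - γ) ^ 2 + b / (1 - γ) = a * (γ / (1 - γ) ^ 2) + b * (1 - γ)⁻¹ by ring]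
  exact h.congr_fun fun t => by ring

lemma abs_tsum_geometric_mul_sub_le (hγ0 : 0 ≤ γ) (hγ1 : γ < 1) {f g : ℕ → ℝ}
    (hf : Summable fun t => γ ^ t * f t) (hg : Summable fun t => γ ^ t * g t) {a b : ℝ}
    (hfg : ∀ t, |f t - g t| ≤ a * t + b) :
    |∑' t, γ ^ t * f t - ∑' t, γ ^ t * g t| ≤ a * γ / (1 - γ) ^ 2 + b / (1 - γ) := by
  have hbound := hasSum_geometric_mul_linear hγ0 hγ1 a b
  have hdiff : Summable fun t => ‖γ ^ t * f t - γ ^ t * g t‖ := (hf.sub hg).norm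
  rw [← hf.tsum_sub hg, ← hbound.tsum_eq, ← Real.norm_eq_abs]
  refine (norm_tsum_le_tsum_norm hdiff).trans (hdiff.tsum_le_tsum (fun t => ?_) hbound.summable)
  rw [← mul_sub, Real.norm_eq_abs, abs_mul, abs_of_nonneg (pow_nonneg hγ0 t)]
  exact mul_le_mul_of_nonneg_left (hfg t) (pow_nonneg hγ0 t)

end Geometric

/-- Lemma 3 of the paper: For two MDPs with a common initial distribution,
transition kernels `ε_T`-close and policies `ε_π`-close in total variation, a reward
bounded by `R`, and discount `γ ∈ [0,1)`, the discounted returns satisfy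
`|G¹(π¹) − G²(π²)| ≤ 2Rγ(ε_π + ε_T)/(1−γ)² + 2Rε_π/(1−γ)`. -/
theorem return_gap_two_mdps {S A : Type*} [Fintype S] [Fintype A]
    (ρ₀ : PMF S) (T₁ T₂ : S × A → PMF S) (π₁ π₂ : S → PMF A) (εT επ : ℝ)
    (hT : ∀ s a, tv (T₁ (s, a)) (T₂ (s, a)) ≤ εT)
    (hπ : ∀ s, tv (π₁ s) (π₂ s) ≤ επ)
    (μ₁ μ₂ : ℕ → PMF S)
    (hμ₁0 : μ₁ 0 = ρ₀) (hμ₂0 : μ₂ 0 = ρ₀)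
    (hμ₁ : ∀ t s', μ₁ (t + 1) s' = ∑ s, ∑ a, μ₁ t s * π₁ s a * T₁ (s, a) s')
    (hμ₂ : ∀ t s', μ₂ (t + 1) s' = ∑ s, ∑ a, μ₂ t s * π₂ s a * T₂ (s, a) s')
    (p₁ p₂ : ℕ → PMF (S × A))
    (hp₁ : ∀ t s a, p₁ t (s, a) = μ₁ t s * π₁ s a)
    (hp₂ : ∀ t s a, p₂ t (s, a) = μ₂ t s * π₂ s a)
    (r : S × A → ℝ) (R : ℝ) (hr : ∀ s a, |r (s, a)| ≤ R)
    (γ : ℝ) (hγ0 : 0 ≤ γ) (hγ1 : γ < 1)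
    (G₁ G₂ : ℝ)
    (hG₁ : G₁ = ∑' t : ℕ, γ ^ t * ∑ sa : S × A, (p₁ t sa).toReal * r sa)
    (hG₂ : G₂ = ∑' t : ℕ, γ ^ t * ∑ sa : S × A, (p₂ t sa).toReal * r sa) :
    |G₁ - G₂| ≤ 2 * R * γ * (επ + εT) / (1 - γ) ^ 2 + 2 * R * επ / (1 - γ) := by
  have hr_pair : ∀ sa : S × A, |r sa| ≤ R := fun sa => hr sa.1 sa.2
  have hpair : ∀ t, tv (p₁ t) (p₂ t) ≤ tv (μ₁ t) (μ₂ t) + επ := fun t =>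
    tv_le_of_apply_eq_mul (hp₁ t) (hp₂ t) hπ
  have hstate : ∀ t : ℕ, tv (μ₁ t) (μ₂ t) ≤ t * (επ + εT) := by
    intro t
    induction t with
    | zero => simp [hμ₁0, hμ₂0, tv_self]
    | succ t ih =>
      have hnext : tv (μ₁ (t + 1)) (μ₂ (t + 1)) ≤ tv (p₁ t) (p₂ t) + εT :=
        tv_le_of_apply_eq_sum_mul (fun s' => by simp only [hμ₁, Fintype.sum_prod_type, hp₁])
          (fun s' => by simp only [hμ₂, Fintype.sum_prod_type, hp₂]) fun sa => hT sa.1 sa.2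
      push_cast
      linarith [hpair t]
  obtain ⟨⟨s, a⟩, -⟩ := (p₁ 0).support_nonempty
  have hR : 0 ≤ R := (abs_nonneg _).trans (hr s a)
  have hreward : ∀ t : ℕ, |∑ sa, (p₁ t sa).toReal * r sa - ∑ sa, (p₂ t sa).toReal * r sa|
      ≤ 2 * R * (επ + εT) * t + 2 * R * επ := fun t => by
    have htv : tv (p₁ t) (p₂ t) ≤ t * (επ + εT) + επ := by linarith [hpair t, hstate t]
    nlinarith [abs_sum_toReal_mul_sub_le (p₁ t) (p₂ t) hr_pair]
  rw [hG₁, hG₂]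
  convert abs_tsum_geometric_mul_sub_le hγ0 hγ1
    (summable_geometric_mul_of_abs_le hγ0 hγ1 fun t => abs_sum_toReal_mul_le (p₁ t) hr_pair)
    (summable_geometric_mul_of_abs_le hγ0 hγ1 fun t => abs_sum_toReal_mul_le (p₂ t) hr_pair)
    hreward using 2
  ring
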